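/- arXiv:2408.01637 — 2 statements merged into one kernel-verified Lean document; each statement's English description precedes it below -/
import Mathlib

section
/- Let (X,d) be a complete metric space, K ⊂ X compact, and μ, μ' ∈ (0,1). Let (f_n) and (h_n) be sequences of self-maps of K with Lipschitz constants at most μ and μ' respectively, with respective non-stationary limit points x* and y* (i.e., f_1∘⋯∘f_n(x) → x* and h_1∘⋯∘h_n(x) → y* for all x ∈ K). If sup_n sup_{x∈K} d(f_n(x), h_n(x)) ≤ ε', then d(x*, y*) ≤ ε'/(1−μ) + ε'/(1−μ') (in particular, for every ε > 0 there is ε' > 0 making d(x*,y*) < ε). -/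
/-- The non-stationary composition `f₁ ∘ f₂ ∘ ⋯ ∘ fₙ`. -/
def nsComp {X : Type*} (f : ℕ → X → X) : ℕ → X → X
  | 0 => id
  | n + 1 => nsComp f n ∘ f (n + 1)

/-!
Composing the two chains step by step, `F_{n+1} x` and `H_{n+1} x` differ by at most
`dist (F_n (f_{n+1} x)) (F_n (h_{n+1} x)) + dist (F_n y) (H_n y)` with `y = h_{n+1} x`; the first
term is at most `μ ^ n * ε'` because `F_n = f_1 ∘ ⋯ ∘ f_n` is `μ ^ n`-Lipschitz on `K`. Hence
`dist (F_n x) (H_n x) ≤ ε' * ∑_{k<n} μ ^ k ≤ ε' / (1 - μ)` for all `n`, and the bound passes to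
the limit `dist x* y*`.
-/

open Finset

section NsComp

variable {X : Type*} [PseudoMetricSpace X] {K : Set X} {f : ℕ → X → X} {μ : ℝ}

lemma dist_nsComp_le (hμ : 0 ≤ μ) (hf : ∀ n, Set.MapsTo (f n) K K)
    (hcontr : ∀ n, ∀ x ∈ K, ∀ y ∈ K, dist (f n x) (f n y) ≤ μ * dist x y) (n : ℕ) :
    ∀ x ∈ K, ∀ y ∈ K, dist (nsComp f n x) (nsComp f n y) ≤ μ ^ n * dist x y := by
  induction n with
  | zero => simp [nsComp]
  | succ n ih =>
    intro x hx y hy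
    calc dist (nsComp f n (f (n + 1) x)) (nsComp f n (f (n + 1) y))
        ≤ μ ^ n * dist (f (n + 1) x) (f (n + 1) y) := ih _ (hf _ hx) _ (hf _ hy)
      _ ≤ μ ^ n * (μ * dist x y) := by gcongr; exact hcontr _ x hx y hy
      _ = μ ^ (n + 1) * dist x y := by ring

lemma dist_nsComp_nsComp_le_geom_sum {h : ℕ → X → X} {ε : ℝ} (hμ : 0 ≤ μ)
    (hf : ∀ n, Set.MapsTo (f n) K K) (hh : ∀ n, Set.MapsTo (h n) K K)
    (hcontr : ∀ n, ∀ x ∈ K, ∀ y ∈ K, dist (f n x) (f n y) ≤ μ * dist x y)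
    (hclose : ∀ n, ∀ x ∈ K, dist (f n x) (h n x) ≤ ε) (n : ℕ) :
    ∀ x ∈ K, dist (nsComp f n x) (nsComp h n x) ≤ ε * ∑ k ∈ range n, μ ^ k := by
  induction n with
  | zero => simp [nsComp]
  | succ n ih =>
    intro x hx
    have hstep : dist (nsComp f n (f (n + 1) x)) (nsComp f n (h (n + 1) x)) ≤ μ ^ n * ε :=
      calc _ ≤ μ ^ n * dist (f (n + 1) x) (h (n + 1) x) :=
            dist_nsComp_le hμ hf hcontr n _ (hf _ hx) _ (hh _ hx)
        _ ≤ μ ^ n * ε := by gcongr; exact hclose _ x hx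
    calc dist (nsComp f n (f (n + 1) x)) (nsComp h n (h (n + 1) x))
        ≤ dist (nsComp f n (f (n + 1) x)) (nsComp f n (h (n + 1) x))
          + dist (nsComp f n (h (n + 1) x)) (nsComp h n (h (n + 1) x)) := dist_triangle _ _ _
      _ ≤ μ ^ n * ε + ε * ∑ k ∈ range n, μ ^ k := add_le_add hstep (ih _ (hh _ hx))
      _ = ε * ∑ k ∈ range (n + 1), μ ^ k := by rw [geom_sum_succ']; ring

lemma dist_nsComp_nsComp_le_div {h : ℕ → X → X} {ε : ℝ} (hμ : μ ∈ Set.Ico 0 1) (hε : 0 ≤ ε)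
    (hf : ∀ n, Set.MapsTo (f n) K K) (hh : ∀ n, Set.MapsTo (h n) K K)
    (hcontr : ∀ n, ∀ x ∈ K, ∀ y ∈ K, dist (f n x) (f n y) ≤ μ * dist x y)
    (hclose : ∀ n, ∀ x ∈ K, dist (f n x) (h n x) ≤ ε) (n : ℕ) {x : X} (hx : x ∈ K) :
    dist (nsComp f n x) (nsComp h n x) ≤ ε / (1 - μ) := by
  have hgeom : ∑ k ∈ range n, μ ^ k ≤ 1 / (1 - μ) := by
    simpa only [range_eq_Ico, pow_zero] using
      (geom_sum_Ico_le_of_lt_one hμ.1 hμ.2 : ∑ k ∈ Ico 0 n, μ ^ k ≤ μ ^ 0 / (1 - μ))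
  calc dist (nsComp f n x) (nsComp h n x) ≤ ε * ∑ k ∈ range n, μ ^ k :=
        dist_nsComp_nsComp_le_geom_sum hμ.1 hf hh hcontr hclose n x hx
    _ ≤ ε * (1 / (1 - μ)) := by gcongr
    _ = ε / (1 - μ) := by ring

end NsComp

theorem stmt10_general {X : Type*} [MetricSpace X]
    {K : Set X} (hne : K.Nonempty)
    {μ μ' : ℝ} (hμ : μ ∈ Set.Ioo (0 : ℝ) 1) (hμ' : μ' ∈ Set.Ioo (0 : ℝ) 1)
    (f h : ℕ → X → X)
    (hfmaps : ∀ n, Set.MapsTo (f n) K K) (hhmaps : ∀ n, Set.MapsTo (h n) K K)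
    (hfcontr : ∀ n, ∀ x ∈ K, ∀ y ∈ K, dist (f n x) (f n y) ≤ μ * dist x y)
    {xs ys : X}
    (hxs : ∀ x ∈ K, Filter.Tendsto (fun n => nsComp f n x) Filter.atTop (nhds xs))
    (hys : ∀ x ∈ K, Filter.Tendsto (fun n => nsComp h n x) Filter.atTop (nhds ys))
    {ε' : ℝ} (hε' : 0 ≤ ε') (hclose : ∀ n, ∀ x ∈ K, dist (f n x) (h n x) ≤ ε') :
    dist xs ys ≤ ε' / (1 - μ) + ε' / (1 - μ') := by
  obtain ⟨x, hx⟩ := hne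
  have hxy : dist xs ys ≤ ε' / (1 - μ) :=
    le_of_tendsto ((hxs x hx).dist (hys x hx)) <| .of_forall fun n =>
      dist_nsComp_nsComp_le_div (Set.Ioo_subset_Ico_self hμ) hε' hfmaps hhmaps hfcontr hclose n hx
  have : 0 ≤ ε' / (1 - μ') := div_nonneg hε' (sub_nonneg.2 hμ'.2.le)
  linarith

/-- Stability of the non-stationary fixed point. If `(fₙ)` and `(hₙ)` are
sequences of `μ`- resp. `μ'`-contractions of the compact `K` with non-stationary limit
points `x*`, `y*`, and `dist(fₙ x, hₙ x) ≤ ε'` uniformly, then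
`dist(x*, y*) ≤ ε'/(1−μ) + ε'/(1−μ')`. -/
theorem stmt10 {X : Type*} [MetricSpace X] [CompleteSpace X]
    {K : Set X} (hK : IsCompact K) (hne : K.Nonempty)
    {μ μ' : ℝ} (hμ : μ ∈ Set.Ioo (0 : ℝ) 1) (hμ' : μ' ∈ Set.Ioo (0 : ℝ) 1)
    (f h : ℕ → X → X)
    (hfmaps : ∀ n, Set.MapsTo (f n) K K) (hhmaps : ∀ n, Set.MapsTo (h n) K K)
    (hfcontr : ∀ n, ∀ x ∈ K, ∀ y ∈ K, dist (f n x) (f n y) ≤ μ * dist x y)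
    (hhcontr : ∀ n, ∀ x ∈ K, ∀ y ∈ K, dist (h n x) (h n y) ≤ μ' * dist x y)
    {xs ys : X}
    (hxs : ∀ x ∈ K, Filter.Tendsto (fun n => nsComp f n x) Filter.atTop (nhds xs))
    (hys : ∀ x ∈ K, Filter.Tendsto (fun n => nsComp h n x) Filter.atTop (nhds ys))
    {ε' : ℝ} (hε' : 0 ≤ ε') (hclose : ∀ n, ∀ x ∈ K, dist (f n x) (h n x) ≤ ε') :
    dist xs ys ≤ ε' / (1 - μ) + ε' / (1 - μ') :=
  stmt10_general hne hμ hμ' f h hfmaps hhmaps hfcontr hxs hys hε' hclose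
end

section
/- Let α = [a_1, a_2, a_3, …] ∈ (0,1) be irrational, let A_a = [[a,1],[1,0]], and let K^s ⊂ ℝ² be the cone orthogonal to K^u_{β₀} (for fixed β₀ ∈ (0,0.1)), which contains the vertical direction (0,1) and is mapped into its interior by each A_a⁻¹. Then the nested intersection E^s_α := ⋂_{n≥1} A_{a_1}⁻¹ ⋯ A_{a_n}⁻¹ (K^s) is a line through the origin of slope −1/α. -/
/-!
Put `T n = A_{a (n-1)} ⋯ A_{a 0}`, so that the `n`-th set of the intersection is
`{v | T n v ∈ K^s}`. As `α` is irrational, its tails `t n` (`t 0 = α`,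
`t (n+1) = 1 / t n - a n`) all lie in `(0,1)`, and `T n (-α, 1) = ±(t 0 ⋯ t (n-1)) • (-t n, 1)`:
these vectors stay in `K^s` and tend to `0`, because `t n * t (n+1) ≤ 1/2`. Writing
`v = e • (1,0) + v 1 • (-α, 1)`, the vector `T n v` is `e • (q, q')` with `1 ≤ q`, `0 ≤ q' ≤ q`,
up to that vanishing error; since `K^s` consists of the `(x, y)` with `x / y ∈ [-(1+2β₀), β₀]`,
this forces `e = 0`.
-/

/-- The stable cone `K^s = (K^u_{β₀})^⊥`, the rotation of `K^u_{β₀}` by `π/2`: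
`K^s = { c₁(β₀,1) + c₂(−(1+2β₀),1) : c₁c₂ ≥ 0 }`. It contains the vertical direction
`(0,1)` and is mapped into its interior by each `A_a⁻¹`. -/
def Ks (β : ℝ) : Set (Fin 2 → ℝ) :=
  {v | ∃ c₁ c₂ : ℝ, c₁ * c₂ ≥ 0 ∧ v = c₁ • ![β, 1] + c₂ • ![-(1 + 2 * β), 1]}

/-- The value of the finite continued fraction `[a₁,…,aₙ]`. -/
noncomputable def cfFin : List ℕ → ℝ
  | [] => 0
  | a :: l => 1 / ((a : ℝ) + cfFin l)

/-- `α = [a₁, a₂, …]`: the finite truncations of the continued fraction with partial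
quotients `a 0 = a₁, a 1 = a₂, …` converge to `α`. -/
def cfLim (a : ℕ → ℕ) (α : ℝ) : Prop :=
  Filter.Tendsto (fun n => cfFin (List.ofFn fun i : Fin n => a i)) Filter.atTop (nhds α)

open Filter Topology Matrix

theorem tendsto_prod_range_zero {f : ℕ → ℝ} {r : ℝ} (hr : r < 1) (hf : ∀ i, |f i| ≤ 1)
    (hf₂ : ∀ i, |f i * f (i + 1)| ≤ r) :
    Tendsto (fun n => ∏ i ∈ Finset.range n, f i) atTop (𝓝 0) := by
  set g := fun n => ∏ i ∈ Finset.range n, |f i|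
  have hg0 : ∀ n, 0 ≤ g n := fun n => Finset.prod_nonneg fun i _ => abs_nonneg _
  have hanti : Antitone g := antitone_nat_of_succ_le fun n => by
    simp only [g, Finset.prod_range_succ]
    exact mul_le_of_le_one_right (hg0 n) (hf n)
  have hlim := tendsto_atTop_ciInf hanti ⟨0, Set.forall_mem_range.2 hg0⟩
  have hstep : ∀ n, g (n + 2) ≤ r * g n := fun n => by
    simp only [g, Finset.prod_range_succ, mul_assoc, ← abs_mul]
    rw [mul_comm r]
    exact mul_le_mul_of_nonneg_left (hf₂ n) (hg0 n)
  have hL : ⨅ n, g n ≤ r * ⨅ n, g n :=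
    le_of_tendsto_of_tendsto ((tendsto_add_atTop_iff_nat 2).2 hlim) (hlim.const_mul r)
      (Eventually.of_forall hstep)
  have hL0 : ⨅ n, g n = 0 :=
    le_antisymm (by nlinarith [le_ciInf hg0]) (le_ciInf hg0)
  rw [hL0] at hlim
  exact squeeze_zero_norm (fun n => (Finset.abs_prod _ _).le) hlim

theorem cfFin_mem_Icc {l : List ℕ} (hl : ∀ b ∈ l, 1 ≤ b) : cfFin l ∈ Set.Icc 0 1 := by
  induction l with
  | nil => simp [cfFin]
  | cons b l ih =>
    obtain ⟨h0, -⟩ := ih fun c hc => hl c (List.mem_cons_of_mem b hc)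
    have hb : (1 : ℝ) ≤ b := by exact_mod_cast hl b List.mem_cons_self
    simp only [cfFin, Set.mem_Icc]
    exact ⟨by positivity, (div_le_one (by positivity)).2 (by linarith)⟩

/-- For `α = [a 0, a 1, …]` this is the tail `[a n, a (n+1), …]` (the Gauss map iterated). -/
noncomputable def cfTail (a : ℕ → ℕ) (α : ℝ) : ℕ → ℝ
  | 0 => α
  | n + 1 => (cfTail a α n)⁻¹ - a n

theorem cfTail_mul_cfTail_succ_le {a : ℕ → ℕ} {α : ℝ} (ha : ∀ i, 1 ≤ a i) {n : ℕ}
    (hn : cfTail a α n ∈ Set.Ioo 0 1) (hn' : cfTail a α (n + 1) ∈ Set.Ioo 0 1) :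
    cfTail a α n * cfTail a α (n + 1) ≤ 1 / 2 := by
  obtain ⟨h0, h1⟩ := hn
  have hb : (1 : ℝ) ≤ a n := by exact_mod_cast ha n
  have hprod : cfTail a α n * cfTail a α (n + 1) = 1 - a n * cfTail a α n := by
    simp only [cfTail]; field_simp
  nlinarith [hn'.2]

namespace cfLim

variable {a : ℕ → ℕ} {α : ℝ}

theorem mem_Icc (ha : ∀ i, 1 ≤ a i) (hcf : cfLim a α) : α ∈ Set.Icc 0 1 :=
  isClosed_Icc.mem_of_tendsto hcf <| Eventually.of_forall fun n =>
    cfFin_mem_Icc fun b hb => by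
      obtain ⟨i, rfl⟩ := List.mem_ofFn.1 hb
      exact ha i

theorem tail (hcf : cfLim a α) (hα : α ≠ 0) :
    cfLim (fun i => a (i + 1)) (α⁻¹ - a 0) := by
  have hshift : ∀ n, cfFin (List.ofFn fun i : Fin n => a (i + 1)) =
      (cfFin (List.ofFn fun i : Fin (n + 1) => a i))⁻¹ - a 0 := fun n => by
    rw [List.ofFn_succ]
    simp only [cfFin, Fin.val_zero, Fin.val_succ, one_div, inv_inv]
    ring
  unfold cfLim
  simp_rw [hshift]
  exact (((tendsto_add_atTop_iff_nat 1).2 hcf).inv₀ hα).sub_const _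

theorem shift_cfTail (hirr : Irrational α) (hcf : cfLim a α) (n : ℕ) :
    cfLim (fun i => a (i + n)) (cfTail a α n) ∧ Irrational (cfTail a α n) := by
  induction n with
  | zero => exact ⟨hcf, hirr⟩
  | succ n ih =>
    obtain ⟨hcfn, hirrn⟩ := ih
    refine ⟨?_, hirrn.inv.sub_natCast _⟩
    have := hcfn.tail hirrn.ne_zero
    simpa only [cfTail, zero_add, add_assoc, add_comm 1 n] using this

theorem cfTail_mem_Ioo (ha : ∀ i, 1 ≤ a i) (hirr : Irrational α) (hcf : cfLim a α) (n : ℕ) :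
    cfTail a α n ∈ Set.Ioo 0 1 := by
  obtain ⟨hcfn, hirrn⟩ := hcf.shift_cfTail hirr n
  obtain ⟨h0, h1⟩ := hcfn.mem_Icc fun i => ha _
  exact ⟨h0.lt_of_ne' hirrn.ne_zero, h1.lt_of_ne hirrn.ne_one⟩

theorem tendsto_prod_neg_cfTail (ha : ∀ i, 1 ≤ a i)
    (hirr : Irrational α) (hcf : cfLim a α) :
    Tendsto (fun n => ∏ i ∈ Finset.range n, -cfTail a α i) atTop (𝓝 0) := by
  have ht := hcf.cfTail_mem_Ioo ha hirr
  refine tendsto_prod_range_zero (r := 1 / 2) (by norm_num) (fun i => ?_) (fun i => ?_)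
  · rw [abs_neg, abs_of_pos (ht i).1]; exact (ht i).2.le
  · rw [neg_mul_neg, abs_of_pos (mul_pos (ht i).1 (ht (i + 1)).1)]
    exact cfTail_mul_cfTail_succ_le ha (ht i) (ht (i + 1))

end cfLim

def cfMat (a : ℕ → ℕ) : ℕ → Matrix (Fin 2) (Fin 2) ℝ
  | 0 => 1
  | n + 1 => !![(a n : ℝ), 1; 1, 0] * cfMat a n

section cfMat

variable (a : ℕ → ℕ)

theorem prod_inv_mul_cfMat (n : ℕ) :
    (List.ofFn fun i : Fin n => (!![(a i : ℝ), 1; 1, 0])⁻¹).prod * cfMat a n = 1 := by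
  induction n with
  | zero => simp [cfMat]
  | succ n ih =>
    have hdet : IsUnit (!![(a n : ℝ), 1; 1, 0]).det := by simp [det_fin_two_of]
    rw [List.ofFn_succ', List.prod_concat, cfMat, mul_assoc, ← mul_assoc _ _ (cfMat a n),
      Fin.val_last, nonsing_inv_mul _ hdet, one_mul]
    simpa only [Fin.val_castSucc] using ih

theorem image_mulVec_prod_inv (n : ℕ) (s : Set (Fin 2 → ℝ)) :
    (fun v => (List.ofFn fun i : Fin n => (!![(a i : ℝ), 1; 1, 0])⁻¹).prod *ᵥ v) '' s =
      (cfMat a n *ᵥ ·) ⁻¹' s := by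
  have h := prod_inv_mul_cfMat a n
  refine congrFun (Set.image_eq_preimage_of_inverse (fun v => ?_) (fun v => ?_)) s
  · rw [mulVec_mulVec, mul_eq_one_comm.1 h, one_mulVec]
  · rw [mulVec_mulVec, h, one_mulVec]

theorem cfMat_succ_mulVec (n : ℕ) (v : Fin 2 → ℝ) :
    cfMat a (n + 1) *ᵥ v =
      ![a n * (cfMat a n *ᵥ v) 0 + (cfMat a n *ᵥ v) 1, (cfMat a n *ᵥ v) 0] := by
  rw [cfMat, ← mulVec_mulVec]
  ext i
  fin_cases i <;> simp [mulVec, dotProduct, Fin.sum_univ_two]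

theorem cfMat_mulVec_one_zero (ha : ∀ i, 1 ≤ a i) (n : ℕ) :
    1 ≤ (cfMat a n *ᵥ ![1, 0]) 0 ∧ 0 ≤ (cfMat a n *ᵥ ![1, 0]) 1 ∧
      (cfMat a n *ᵥ ![1, 0]) 1 ≤ (cfMat a n *ᵥ ![1, 0]) 0 := by
  induction n with
  | zero => simp [cfMat]
  | succ n ih =>
    obtain ⟨h0, h1, h10⟩ := ih
    rw [cfMat_succ_mulVec]
    simp only [cons_val_zero, cons_val_one]
    have hb : (1 : ℝ) ≤ a n := by exact_mod_cast ha n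
    exact ⟨by nlinarith, by linarith, by nlinarith⟩

theorem cfMat_mulVec_eq_prod_smul {α : ℝ} (ht : ∀ i, cfTail a α i ≠ 0) (n : ℕ) :
    cfMat a n *ᵥ ![-α, 1] =
      (∏ i ∈ Finset.range n, -cfTail a α i) • ![-cfTail a α n, 1] := by
  induction n with
  | zero => simp [cfMat, cfTail]
  | succ n ih =>
    rw [cfMat_succ_mulVec, ih, Finset.prod_range_succ]
    have htn := ht n
    ext i
    fin_cases i
    · simp only [cfTail, Fin.zero_eta, Pi.smul_apply, cons_val_zero, cons_val_one, smul_eq_mul]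
      field_simp
      ring
    · simp

end cfMat

section Ks

variable {β : ℝ}

theorem mem_Ks_iff (hβ : 1 + 3 * β ≠ 0) {v : Fin 2 → ℝ} :
    v ∈ Ks β ↔ 0 ≤ (v 0 + (1 + 2 * β) * v 1) * (β * v 1 - v 0) := by
  constructor
  · rintro ⟨c₁, c₂, hc, rfl⟩
    simp only [Pi.add_apply, Pi.smul_apply, smul_eq_mul, cons_val_zero,
      cons_val_one]
    nlinarith [sq_nonneg (1 + 3 * β)]
  · intro hv
    refine ⟨(v 0 + (1 + 2 * β) * v 1) / (1 + 3 * β), (β * v 1 - v 0) / (1 + 3 * β), ?_, ?_⟩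
    · rw [div_mul_div_comm]; exact div_nonneg hv (mul_self_nonneg _)
    · have hβ' : 1 + β * 3 ≠ 0 := by rwa [mul_comm]
      ext i
      fin_cases i <;> simp only [Fin.isValue, Fin.zero_eta, Fin.mk_one, Pi.add_apply, smul_cons,
        smul_eq_mul, smul_empty, cons_val_zero, cons_val_one, cons_val_fin_one, mul_one] <;>
        field_simp <;> ring

theorem smul_mem_Ks {v : Fin 2 → ℝ} (hv : v ∈ Ks β) (c : ℝ) : c • v ∈ Ks β := by
  obtain ⟨c₁, c₂, hc, rfl⟩ := hv
  refine ⟨c * c₁, c * c₂, ?_, by simp only [smul_add, smul_smul]⟩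
  nlinarith [mul_nonneg (sq_nonneg c) hc]

theorem mem_Ks_of_mem_Icc (hβ : 0 ≤ β) {t : ℝ} (ht : t ∈ Set.Icc 0 1) :
    ![-t, 1] ∈ Ks β := by
  rw [mem_Ks_iff (by positivity)]
  simp only [cons_val_zero, cons_val_one]
  nlinarith [ht.1, ht.2]

theorem abs_mul_le_of_smul_add_smul_mem_Ks (hβ₀ : 0 ≤ β) (hβ₁ : β ≤ 1)
    {x : Fin 2 → ℝ} (hx : 1 ≤ x 0 ∧ 0 ≤ x 1 ∧ x 1 ≤ x 0) {e c t : ℝ} (ht : |t| ≤ 1)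
    (h : e • x + c • ![-t, 1] ∈ Ks β) :
    |e| * (1 - β) ≤ 2 * (1 + 2 * β) * |c| := by
  wlog he : 0 ≤ e generalizing e c
  · have h' : (-e) • x + (-c) • ![-t, 1] ∈ Ks β := by
      simpa only [neg_smul, neg_add, smul_neg, neg_neg, one_smul] using smul_mem_Ks h (-1)
    simpa only [abs_neg] using this h' (by linarith)
  obtain ⟨hx0, hx1, hx10⟩ := hx
  rw [mem_Ks_iff (by positivity)] at h
  simp only [Pi.add_apply, Pi.smul_apply, smul_eq_mul, cons_val_zero,
    cons_val_one] at h
  have hct : |c * t| ≤ |c| := by rw [abs_mul]; exact mul_le_of_le_one_right (abs_nonneg c) ht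
  have hc := abs_le.1 hct
  rw [abs_of_nonneg he]
  have hc' := neg_abs_le c
  have hc'' := le_abs_self c
  rcases mul_nonneg_iff.1 h with ⟨-, h₂⟩ | ⟨h₁, -⟩
  · nlinarith [mul_nonneg (mul_nonneg he hβ₀) (sub_nonneg.2 hx10),
      mul_nonneg (mul_nonneg he (sub_nonneg.2 hβ₁)) (sub_nonneg.2 hx0)]
  · nlinarith [mul_nonneg he (sub_nonneg.2 hx0), mul_nonneg he hx1,
      mul_nonneg (mul_nonneg he hβ₀) hx1, mul_nonneg he hβ₀]

end Ks

namespace cfLim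

variable {a : ℕ → ℕ} {α β : ℝ}

theorem cfMat_mulVec_smul_mem_Ks (hβ : 0 ≤ β) (ha : ∀ i, 1 ≤ a i) (hirr : Irrational α)
    (hcf : cfLim a α) (c : ℝ) (n : ℕ) : cfMat a n *ᵥ (c • ![-α, 1]) ∈ Ks β := by
  have ht := hcf.cfTail_mem_Ioo ha hirr
  rw [mulVec_smul, cfMat_mulVec_eq_prod_smul a (fun i => (ht i).1.ne'), smul_smul]
  exact smul_mem_Ks (mem_Ks_of_mem_Icc hβ (Set.Ioo_subset_Icc_self (ht n))) _

theorem eq_smul_of_forall_cfMat_mulVec_mem_Ks (hβ₀ : 0 ≤ β) (hβ₁ : β < 1)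
    (ha : ∀ i, 1 ≤ a i) (hirr : Irrational α) (hcf : cfLim a α) {v : Fin 2 → ℝ}
    (hv : ∀ n, cfMat a (n + 1) *ᵥ v ∈ Ks β) : v = v 1 • ![-α, 1] := by
  have ht := hcf.cfTail_mem_Ioo ha hirr
  have hdecomp : v = (v 0 + α * v 1) • ![1, 0] + v 1 • ![-α, 1] := by
    ext i
    fin_cases i
    · simp only [Fin.zero_eta, Pi.add_apply, smul_cons, smul_eq_mul, smul_empty, cons_val_zero]
      ring
    · simp
  have hbound : ∀ n, |v 0 + α * v 1| * (1 - β) ≤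
      2 * (1 + 2 * β) * |v 1 * ∏ i ∈ Finset.range (n + 1), -cfTail a α i| := fun n => by
    have hvn := hv n
    rw [hdecomp, mulVec_add, mulVec_smul, mulVec_smul,
      cfMat_mulVec_eq_prod_smul a (fun i => (ht i).1.ne'), smul_smul] at hvn
    refine abs_mul_le_of_smul_add_smul_mem_Ks hβ₀ hβ₁.le (cfMat_mulVec_one_zero a ha _) ?_ hvn
    exact abs_le.2 ⟨by linarith [(ht (n + 1)).1], (ht (n + 1)).2.le⟩
  have hlim := (((tendsto_add_atTop_iff_nat 1).2 (hcf.tendsto_prod_neg_cfTail ha hirr)).const_mul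
    (v 1)).abs.const_mul (2 * (1 + 2 * β))
  simp only [mul_zero, abs_zero] at hlim
  have he : |v 0 + α * v 1| ≤ 0 := by
    nlinarith [ge_of_tendsto' hlim hbound, abs_nonneg (v 0 + α * v 1)]
  ext i
  fin_cases i
  · simp only [Fin.zero_eta, Pi.smul_apply, cons_val_zero, smul_eq_mul]
    linarith [abs_nonpos_iff.1 he]
  · simp

end cfLim

theorem stmt19_general (β₀ : ℝ) (hβ : β₀ ∈ Set.Ioo (0 : ℝ) 0.1)
    (α : ℝ) (hirr : Irrational α)
    (a : ℕ → ℕ) (ha : ∀ i, 1 ≤ a i) (hcf : cfLim a α) :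
    (⋂ n : ℕ,
        (fun v => ((List.ofFn fun i : Fin (n + 1) =>
          (!![(a i : ℝ), 1; 1, 0])⁻¹).prod.mulVec v)) '' Ks β₀)
      = Set.range (fun c : ℝ => c • ![-α, (1 : ℝ)]) := by
  obtain ⟨hβ₀, hβ₁⟩ := hβ
  replace hβ₁ : β₀ < 1 := by norm_num at hβ₁; linarith
  simp_rw [image_mulVec_prod_inv]
  ext v
  simp only [Set.mem_iInter, Set.mem_preimage, Set.mem_range]
  constructor
  · exact fun hv =>
      ⟨v 1, (hcf.eq_smul_of_forall_cfMat_mulVec_mem_Ks hβ₀.le hβ₁ ha hirr hv).symm⟩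
  · rintro ⟨c, rfl⟩ n
    exact hcf.cfMat_mulVec_smul_mem_Ks hβ₀.le ha hirr c (n + 1)

/-- For an irrational `α = [a₁,a₂,…] ∈ (0,1)` and `β₀ ∈ (0,0.1)`, the
nested intersection `E^s_α = ⋂_{n≥1} A_{a₁}⁻¹ ⋯ A_{aₙ}⁻¹ (K^s)` is the line through the
origin of slope `−1/α`, i.e. the span of `(−α, 1)ᵀ`. -/
theorem stmt19 (β₀ : ℝ) (hβ : β₀ ∈ Set.Ioo (0 : ℝ) 0.1)
    (α : ℝ) (hα : α ∈ Set.Ioo (0 : ℝ) 1) (hirr : Irrational α)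
    (a : ℕ → ℕ) (ha : ∀ i, 1 ≤ a i) (hcf : cfLim a α) :
    (⋂ n : ℕ,
        (fun v => ((List.ofFn fun i : Fin (n + 1) =>
          (!![(a i : ℝ), 1; 1, 0])⁻¹).prod.mulVec v)) '' Ks β₀)
      = Set.range (fun c : ℝ => c • ![-α, (1 : ℝ)]) :=
  stmt19_general β₀ hβ α hirr a ha hcf
end
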